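/- arXiv:0804.2908 — 2 statements merged into one kernel-verified Lean document; each statement's English description precedes it below -/
import Mathlib

section
/- Let M be an n-generated model of T generated by ā such that p_ā(M) is supported over K(T|P_{n,γ}). Then for every generating n-tuple b̄ of M, the type p_b̄(M) is also supported over K(T|P_{n,γ}). -/
open FirstOrder FirstOrder.Language Cardinal

namespace Paper

variable (L : FirstOrder.Language.{0, 0})

/-- A tuple `a` generates `M`: every element is the value of a term at `a`. -/
def Generates {M : Type*} [L.Structure M] {n : ℕ} (a : Fin n → M) : Prop :=
  ∀ y : M, ∃ t : L.Term (Fin n), t.realize a = y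

/-- A type over the language `L(c₁,…,cₙ)` in `k` free variables, represented as a set of
`L`-formulas in variables `Fin n ⊕ Fin k` (the first block playing the role of the constants). -/
def NType (n : ℕ) : Type := Σ k : ℕ, Set (L.Formula (Fin n ⊕ Fin k))

variable {L}

/-- The pair `(M, a)` realizes the type `p` (in the language with the constants interpreted
as `a`). -/
def RealizesNType {M : Type*} [L.Structure M] {n : ℕ} (a : Fin n → M) (p : NType L n) : Prop :=
  ∃ v : Fin p.1 → M, ∀ φ ∈ p.2, φ.Realize (Sum.elim a v)

variable (L) in
/-- The type `pₙ(y) = { y ≠ τ(c̄) | τ an L-term }`. -/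
def pType (n : ℕ) : NType L n :=
  ⟨1, { φ | ∃ t : L.Term (Fin n),
    φ = (Term.equal (t.relabel Sum.inl) (Term.var (Sum.inr 0))).not }⟩

/-- The complete type `p_ā(M)` of a tuple, viewed as a set of sentences of `L(c̄)`. -/
def ctype {M : Type*} [L.Structure M] {n : ℕ} (a : Fin n → M) : NType L n :=
  ⟨0, { φ | ∃ ψ : L.Formula (Fin n), ψ.Realize a ∧ φ = ψ.relabel Sum.inl }⟩

/-- A type (in the language with constants) is supported over a class `K` of models-with-tuples
if some formula, satisfiable in `K`, forces realization of the type throughout `K`. -/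
def Supported {T : L.Theory} {n : ℕ} (K : Set (Σ M : Theory.ModelType.{0, 0, 0} T, Fin n → M))
    (p : NType L n) : Prop :=
  ∃ φ : L.Formula (Fin n ⊕ Fin p.1),
    (∃ P ∈ K, ∃ v : Fin p.1 → P.1, φ.Realize (Sum.elim P.2 v)) ∧
    ∀ P ∈ K, ∀ v : Fin p.1 → P.1, φ.Realize (Sum.elim P.2 v) →
      ∀ ψ ∈ p.2, ψ.Realize (Sum.elim P.2 v)

/-- `rk`: `RankEq T n α M` means the `n`-rank of `M` is `α`. Defined by transfinite
recursion: the rank is `α ≥ 1` iff for every generating `n`-tuple `ā`, `p_ā(M)` is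
supported over the class of models (with generating tuple) of `T` omitting `pₙ` and the
complete types of all models of smaller rank. -/
def RankEq (T : L.Theory) (n : ℕ) : Ordinal.{0} → Theory.ModelType.{0, 0, 0} T → Prop :=
  Ordinal.lt_wf.fix fun α ih M =>
    1 ≤ α ∧ (∃ a : Fin n → M, Generates L a) ∧
      ∀ a : Fin n → M, Generates L a →
        Supported
          { P : Σ N : T.ModelType, Fin n → N |
            ¬ RealizesNType (L := L) P.2 (pType L n) ∧
            ∀ β : Ordinal, (h : β < α) → ∀ N : T.ModelType, ih β h N →
              ∀ b : Fin n → N, Generates L b → ¬ RealizesNType (L := L) P.2 (ctype (L := L) b) }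
          (ctype a)

/-- The class `K(T|P_{n,α})`: models of `T` with a distinguished `n`-tuple, omitting `pₙ`
(equivalently, generated by the tuple) and omitting the complete type of every `n`-generated
model of `T` of rank `< α`. -/
def Kclass (T : L.Theory) (n : ℕ) (α : Ordinal.{0}) :
    Set (Σ M : Theory.ModelType.{0, 0, 0} T, Fin n → M) :=
  { P | ¬ RealizesNType (L := L) P.2 (pType L n) ∧
    ∀ β : Ordinal, β < α → ∀ N : T.ModelType, RankEq T n β N →
      ∀ b : Fin n → N, Generates L b → ¬ RealizesNType (L := L) P.2 (ctype (L := L) b) }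

variable (L) in
/-- `n`-generated models of `T` (with countable carrier). -/
abbrev NGenModel (T : L.Theory) (n : ℕ) : Type 1 :=
  { M : Theory.ModelType.{0, 0, 0} T // ∃ a : Fin n → M, Generates L a }

instance isoSetoid {T : L.Theory} {n : ℕ} : Setoid (NGenModel L T n) where
  r M N := Nonempty (M.1 ≃[L] N.1)
  iseqv := ⟨fun M => ⟨FirstOrder.Language.Equiv.refl L M.1⟩, fun ⟨e⟩ => ⟨e.symm⟩, fun ⟨e⟩ ⟨f⟩ => ⟨FirstOrder.Language.Equiv.comp f e⟩⟩

variable (L) in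
/-- `α_n(T)`: the number of isomorphism classes of `n`-generated models of `T`. -/
def alphaCard (T : L.Theory) (n : ℕ) : Cardinal.{1} :=
  Cardinal.mk (Quotient (isoSetoid (L := L) (T := T) (n := n)))

variable (L) in
/-- `T` is `n`-consistent: it has an `n`-generated model. -/
def NConsistent (T : L.Theory) (n : ℕ) : Prop :=
  ∃ M : Theory.ModelType.{0, 0, 0} T, ∃ a : Fin n → M, Generates L a


/-! ### Universal / existential formulas, ∀∃ theories -/

variable (L) in
/-- A universal formula: universal quantifiers over a quantifier-free formula. -/
def IsUniversalFormula {α : Type} (φ : L.Formula α) : Prop :=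
  ∃ (k : ℕ) (ψ : L.BoundedFormula α k), ψ.IsQF ∧ φ = ψ.alls

variable (L) in
/-- An existential formula: existential quantifiers over a quantifier-free formula. -/
def IsExistentialFormula {α : Type} (φ : L.Formula α) : Prop :=
  ∃ (k : ℕ) (ψ : L.BoundedFormula α k), ψ.IsQF ∧ φ = ψ.exs

/-- Iterated existential quantification of the last `k` bounded variables. -/
def exsTo {α : Type} : ∀ {m k : ℕ}, L.BoundedFormula α (m + k) → L.BoundedFormula α m
  | _, 0, φ => φ
  | _, _ + 1, φ => exsTo φ.ex

variable (L) in
/-- A `∀∃`-sentence: `∀ x̄ ∃ ȳ ψ` with `ψ` quantifier-free. -/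
def IsAESentence (σ : L.Sentence) : Prop :=
  ∃ (m k : ℕ) (ψ : L.BoundedFormula Empty (m + k)), ψ.IsQF ∧ σ = (exsTo ψ).alls

variable (L) in
/-- A `∀∃`-theory. -/
def IsAETheory (T : L.Theory) : Prop := ∀ σ ∈ T, IsAESentence L σ

/-- The universal type `p_{ā,∀}(M)` of a tuple: universal sentences of `L(c̄)` true of `ā`. -/
def utype {M : Type*} [L.Structure M] {n : ℕ} (a : Fin n → M) : NType L n :=
  ⟨0, { φ | ∃ ψ : L.Formula (Fin n),
    IsUniversalFormula L ψ ∧ ψ.Realize a ∧ φ = ψ.relabel Sum.inl }⟩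

/-- A universal type is existentially supported over a class `K` if some existential formula,
satisfiable in `K`, forces its realization throughout `K`. -/
def ESupported {T : L.Theory} {n : ℕ} (K : Set (Σ M : Theory.ModelType.{0, 0, 0} T, Fin n → M))
    (p : NType L n) : Prop :=
  ∃ φ : L.Formula (Fin n ⊕ Fin p.1), IsExistentialFormula L φ ∧
    (∃ P ∈ K, ∃ v : Fin p.1 → P.1, φ.Realize (Sum.elim P.2 v)) ∧
    ∀ P ∈ K, ∀ v : Fin p.1 → P.1, φ.Realize (Sum.elim P.2 v) →
      ∀ ψ ∈ p.2, ψ.Realize (Sum.elim P.2 v)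

/-- `Rk`: the rank defined from universal types and existential supports. -/
def URankEq (T : L.Theory) (n : ℕ) : Ordinal.{0} → Theory.ModelType.{0, 0, 0} T → Prop :=
  Ordinal.lt_wf.fix fun α ih M =>
    1 ≤ α ∧ (∃ a : Fin n → M, Generates L a) ∧
      ∀ a : Fin n → M, Generates L a →
        ESupported
          { P : Σ N : Theory.ModelType.{0, 0, 0} T, Fin n → N |
            ¬ RealizesNType (L := L) P.2 (pType L n) ∧
            ∀ β : Ordinal, (h : β < α) → ∀ N : Theory.ModelType.{0, 0, 0} T, ih β h N →
              ∀ b : Fin n → N, Generates L b → ¬ RealizesNType (L := L) P.2 (utype b) }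
          (utype a)

/-- The class `K(T|Q_{n,α})` of the universal rank. -/
def UKclass (T : L.Theory) (n : ℕ) (α : Ordinal.{0}) :
    Set (Σ M : Theory.ModelType.{0, 0, 0} T, Fin n → M) :=
  { P | ¬ RealizesNType (L := L) P.2 (pType L n) ∧
    ∀ β : Ordinal, β < α → ∀ N : Theory.ModelType.{0, 0, 0} T, URankEq T n β N →
      ∀ b : Fin n → N, Generates L b → ¬ RealizesNType (L := L) P.2 (utype b) }

/-! ### Types in finitely many variables, classes of models, omitting types -/

variable (L) in
/-- A type in finitely many variables. -/
def MType : Type := Σ k : ℕ, Set (L.Formula (Fin k))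

variable (L) in
/-- A type all of whose formulas are universal. -/
def IsUniversalMType (p : MType L) : Prop := ∀ φ ∈ p.2, IsUniversalFormula L φ

/-- A model realizes a type if some tuple satisfies all of its formulas. -/
def MRealizes {T : L.Theory} (M : Theory.ModelType.{0, 0, 0} T) (p : MType L) : Prop :=
  ∃ v : Fin p.1 → M, ∀ φ ∈ p.2, φ.Realize v

/-- The class `K(T|P)` of models of `T` omitting every type in `P`. -/
def KTP (T : L.Theory) (P : Set (MType L)) : Set (Theory.ModelType.{0, 0, 0} T) :=
  { M | ∀ p ∈ P, ¬ MRealizes M p }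

/-- A type is supported over a class `K` of models of `T`. -/
def MSupported {T : L.Theory} (K : Set (Theory.ModelType.{0, 0, 0} T)) (q : MType L) : Prop :=
  ∃ φ : L.Formula (Fin q.1),
    (∃ M ∈ K, ∃ v : Fin q.1 → M, φ.Realize v) ∧
    ∀ M ∈ K, ∀ v : Fin q.1 → M, φ.Realize v → ∀ ψ ∈ q.2, ψ.Realize v

/-- A universal type is existentially supported over a class `K` of models of `T`. -/
def MESupported {T : L.Theory} (K : Set (Theory.ModelType.{0, 0, 0} T)) (q : MType L) : Prop :=
  ∃ φ : L.Formula (Fin q.1), IsExistentialFormula L φ ∧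
    (∃ M ∈ K, ∃ v : Fin q.1 → M, φ.Realize v) ∧
    ∀ M ∈ K, ∀ v : Fin q.1 → M, φ.Realize v → ∀ ψ ∈ q.2, ψ.Realize v


/-! ### Groups -/

/-- The function symbols of the language of groups. -/
inductive GroupFunc : ℕ → Type
  | mul : GroupFunc 2
  | inv : GroupFunc 1
  | one : GroupFunc 0

/-- The first-order language of groups. -/
def grpLang : FirstOrder.Language.{0, 0} := ⟨GroupFunc, fun _ => Empty⟩

/-- Any group is a `grpLang`-structure. -/
instance grpStructure (G : Type*) [Group G] : grpLang.Structure G where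
  funMap {n} f v :=
    match f with
    | .mul => v 0 * v 1
    | .inv => (v 0)⁻¹
    | .one => 1
  RelMap {n} r := r.elim

/-- The universal theory `Th_∀(H)` of a group `H`. -/
def uTheoryOf (H : Type*) [Group H] : grpLang.Theory :=
  { σ | IsUniversalFormula grpLang σ ∧ H ⊨ σ }

/-- The algebraic set `V(S)` defined by a set `S ⊆ H ∗ F(x₁,…,xₙ)` of equations. -/
def Vset {H : Type} [Group H] {n : ℕ} (S : Set (Monoid.Coprod H (FreeGroup (Fin n)))) :
    Set (Fin n → H) :=
  { g | ∀ s ∈ S, Monoid.Coprod.lift (MonoidHom.id H) (FreeGroup.lift g) s = 1 }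

/-- A group `H` is equationally noetherian if every algebraic set over `H` is defined by a
finite subsystem. -/
def EquationallyNoetherian (H : Type) [Group H] : Prop :=
  ∀ (n : ℕ) (S : Set (Monoid.Coprod H (FreeGroup (Fin n)))),
    ∃ S₀ ⊆ S, S₀.Finite ∧ Vset S = Vset S₀

/-- Bundled finitely generated `H`-limit groups (with countable-universe carrier):
finitely generated groups satisfying the universal theory of `H`. -/
def LimitGroup (H : Type) [Group H] : Type 1 :=
  { G : GrpCat.{0} // Group.FG G ∧ (G : Type) ⊨ uTheoryOf H }

instance limitGroupSetoid {H : Type} [Group H] : Setoid (LimitGroup H) where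
  r A B := Nonempty ((A.1 : Type) ≃* (B.1 : Type))
  iseqv := ⟨fun A => ⟨MulEquiv.refl _⟩, fun ⟨e⟩ => ⟨e.symm⟩, fun ⟨e⟩ ⟨f⟩ => ⟨e.trans f⟩⟩

/-- `GRank H G γ` : the group `G`, as a model of `Th_∀(H)`, has universal rank `Rk(G) = γ`
(with respect to some tuple-length). -/
def GRank (H : Type) [Group H] (G : Type) [Group G] (hmod : G ⊨ uTheoryOf H)
    (γ : Ordinal.{0}) : Prop :=
  ∃ n : ℕ, URankEq (uTheoryOf H) n γ
    (@Theory.ModelType.of grpLang (uTheoryOf H) G _ hmod One.instNonempty)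

/-- `G` is `H`-determined: some finite set `X ⊆ G \ {1}` is such that every homomorphism
from `G` to an `H`-limit group killing no element of `X` is injective. -/
def HDetermined (H : Type) [Group H] (G : Type) [Group G] : Prop :=
  ∃ X : Finset G, (1 : G) ∉ X ∧
    ∀ (L' : Type) [Group L'], Group.FG L' → (L' ⊨ uTheoryOf H) →
      ∀ f : G →* L', (∀ x ∈ X, f x ≠ 1) → Function.Injective f

end Paper

/-! Write `b̄ = t̄(ā)` and `ā = s̄(b̄)` with tuples of terms `t̄`, `s̄`. If `φ(x̄)` supports `p_ā(M)`,
then `φ(s̄(x̄)) ∧ t̄(s̄(x̄)) = x̄` supports `p_b̄(M)`: a tuple `c̄` satisfying it has `c̄ = t̄(s̄(c̄))`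
with `s̄(c̄)` of type `p_ā(M)`, hence `c̄` has the type of `t̄(ā) = b̄`. For this, `s̄(c̄)` must again
be the distinguished tuple of a member of `K(T|P_{n,γ})`; this class is closed under passing to a
term-interdefinable tuple, since a complete type of a generating tuple realized by the new tuple
pulls back to one realized by the old. -/

theorem FirstOrder.Language.Formula.realize_subst {L : Language} {M : Type*} [L.Structure M]
    {α β : Type*} (φ : L.Formula α) (f : α → L.Term β) (v : β → M) :
    Formula.Realize (φ.subst f) v ↔ φ.Realize (Term.realize v ∘ f) :=
  BoundedFormula.realize_subst

namespace Paper

variable {L : FirstOrder.Language.{0, 0}} {n : ℕ}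

noncomputable def termsEqual {ι α : Type} [Finite ι] (f g : ι → L.Term α) : L.Formula α :=
  Formula.iInf fun i => (f i).equal (g i)

theorem realize_termsEqual {ι α : Type} [Finite ι] {M : Type*} [L.Structure M]
    {f g : ι → L.Term α} {v : α → M} :
    (termsEqual f g).Realize v ↔ Term.realize v ∘ f = Term.realize v ∘ g := by
  simp only [termsEqual, Formula.realize_iInf, Formula.realize_equal, funext_iff,
    Function.comp_apply]

theorem realize_comp_subst {ι α β : Type*} {M : Type*} [L.Structure M] (f : ι → L.Term α)
    (g : α → L.Term β) (v : β → M) :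
    Term.realize v ∘ (fun i => (f i).subst g) = Term.realize (Term.realize v ∘ g) ∘ f :=
  funext fun _ => Term.realize_subst

theorem generates_of_eq_comp {M : Type*} [L.Structure M] {m : ℕ} {c : Fin m → M}
    {d : Fin n → M} {f : Fin m → L.Term (Fin n)} (hc : Generates L c)
    (h : c = Term.realize d ∘ f) : Generates L d := by
  intro y
  obtain ⟨u, rfl⟩ := hc y
  exact ⟨u.subst f, by rw [Term.realize_subst, h]; rfl⟩

theorem not_realizesNType_pType_iff {M : Type*} [L.Structure M] {c : Fin n → M} :
    ¬ RealizesNType c (pType L n) ↔ Generates L c := by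
  have realize_pType (v : Fin 1 → M) (u : L.Term (Fin n)) :
      ((Term.equal (u.relabel Sum.inl) (Term.var (Sum.inr 0))).not : L.Formula _).Realize
        (Sum.elim c v) ↔ u.realize c ≠ v 0 := by
    simp only [Formula.realize_not, Formula.realize_equal, Term.realize_relabel,
      Sum.elim_comp_inl, Term.realize_var, Sum.elim_inr]
  constructor
  · intro h y
    by_contra! hy
    exact h ⟨fun _ => y, by rintro φ ⟨u, rfl⟩; exact (realize_pType _ u).2 (hy u)⟩
  · rintro hc ⟨v, hv⟩
    obtain ⟨u, hu⟩ := hc (v (0 : Fin 1))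
    exact (realize_pType v u).1 (hv _ ⟨u, rfl⟩) hu

section CompleteType

variable {M N : Type*} [L.Structure M] [L.Structure N] {m : ℕ} {c : Fin m → M} {d : Fin m → N}

theorem realizesNType_ctype_iff :
    RealizesNType d (ctype (L := L) c) ↔
      ∀ ψ : L.Formula (Fin m), ψ.Realize d ↔ ψ.Realize c := by
  have realize_inl (ψ : L.Formula (Fin m)) (v : Fin 0 → N) :
      (ψ.relabel Sum.inl).Realize (Sum.elim d v) ↔ ψ.Realize d := by
    rw [Formula.realize_relabel, Sum.elim_comp_inl]
  constructor
  · rintro ⟨v, hv⟩ ψ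
    have realize_of (χ : L.Formula (Fin m)) (hχ : χ.Realize c) : χ.Realize d :=
      (realize_inl χ v).1 (hv _ ⟨χ, hχ, rfl⟩)
    refine ⟨fun hd => ?_, realize_of ψ⟩
    by_contra hc
    exact (Formula.realize_not.1 (realize_of ψ.not (Formula.realize_not.2 hc))) hd
  · intro h
    refine ⟨Fin.elim0, ?_⟩
    rintro φ ⟨ψ, hψ, rfl⟩
    exact (realize_inl ψ _).2 ((h ψ).2 hψ)

variable (h : RealizesNType d (ctype (L := L) c))
include h

theorem RealizesNType.comp_terms_eq_iff {k : ℕ} (f g : Fin k → L.Term (Fin m)) :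
    Term.realize d ∘ f = Term.realize d ∘ g ↔
      Term.realize c ∘ f = Term.realize c ∘ g := by
  simpa only [realize_termsEqual] using realizesNType_ctype_iff.1 h (termsEqual f g)

theorem RealizesNType.ctype_comp (f : Fin n → L.Term (Fin m)) :
    RealizesNType (Term.realize d ∘ f) (ctype (L := L) (Term.realize c ∘ f)) :=
  realizesNType_ctype_iff.2 fun ψ => by
    simpa only [Formula.realize_subst] using realizesNType_ctype_iff.1 h (ψ.subst f)

end CompleteType

variable {T : L.Theory}

def InterdefinableClosed (K : Set (Σ M : Theory.ModelType.{0, 0, 0} T, Fin n → M)) : Prop :=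
  ∀ P ∈ K, ∀ (d : Fin n → P.1) (f g : Fin n → L.Term (Fin n)),
    d = Term.realize P.2 ∘ f → P.2 = Term.realize d ∘ g →
      (⟨P.1, d⟩ : Σ M : Theory.ModelType.{0, 0, 0} T, Fin n → M) ∈ K

theorem interdefinableClosed_Kclass (γ : Ordinal) : InterdefinableClosed (Kclass T n γ) := by
  rintro P ⟨hgen, homit⟩ d f g hd hP
  rw [not_realizesNType_pType_iff] at hgen
  refine ⟨not_realizesNType_pType_iff.2 (generates_of_eq_comp hgen hP), ?_⟩
  intro β hβ N hN c hc hdc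
  have hc_fg :
      Term.realize c ∘ (fun i => (f i).subst g) = Term.realize c ∘ (Term.var (L := L)) := by
    refine (hdc.comp_terms_eq_iff _ _).1 ?_
    rw [realize_comp_subst, ← hP, ← hd]
    rfl
  rw [realize_comp_subst] at hc_fg
  have hgc : Generates L (Term.realize c ∘ g) := generates_of_eq_comp hc hc_fg.symm
  exact homit β hβ N hN _ hgc (hP ▸ hdc.ctype_comp g)

theorem supported_ctype_iff {K : Set (Σ M : Theory.ModelType.{0, 0, 0} T, Fin n → M)}
    {M : Type*} [L.Structure M] {a : Fin n → M} :
    Supported K (ctype (L := L) a) ↔ ∃ φ : L.Formula (Fin n), (∃ P ∈ K, φ.Realize P.2) ∧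
      ∀ P ∈ K, φ.Realize P.2 → RealizesNType P.2 (ctype (L := L) a) := by
  have realize_elim {X : Type} [L.Structure X] (φ : L.Formula (Fin n ⊕ Fin 0)) (c : Fin n → X)
      (v : Fin 0 → X) :
      φ.Realize (Sum.elim c v) ↔ (φ.relabel (Sum.elim id Fin.elim0)).Realize c := by
    rw [Formula.realize_relabel, Sum.comp_elim, Function.comp_id, Subsingleton.elim v (c ∘ _)]
  constructor
  · rintro ⟨φ, ⟨P, hP, v, hφ⟩, hforce⟩
    exact ⟨φ.relabel (Sum.elim id Fin.elim0), ⟨P, hP, (realize_elim φ _ v).1 hφ⟩,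
      fun Q hQ hφQ => ⟨Fin.elim0, hforce Q hQ _ ((realize_elim φ _ _).2 hφQ)⟩⟩
  · rintro ⟨φ, ⟨P, hP, hφ⟩, hforce⟩
    refine ⟨φ.relabel Sum.inl, ⟨P, hP, Fin.elim0, Formula.realize_relabel.2 hφ⟩,
      fun Q hQ v hφQ => ?_⟩
    obtain ⟨w, hw⟩ := hforce Q hQ (Formula.realize_relabel (g := Sum.inl).1 hφQ)
    rwa [show w = v from funext fun i => Fin.elim0 i] at hw

theorem Supported.ctype_of_interdefinable
    {K : Set (Σ M : Theory.ModelType.{0, 0, 0} T, Fin n → M)} (hK : InterdefinableClosed K)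
    {M : Type*} [L.Structure M] {a b : Fin n → M} {t s : Fin n → L.Term (Fin n)}
    (hb : b = Term.realize a ∘ t) (ha : a = Term.realize b ∘ s)
    (h : Supported K (ctype (L := L) a)) : Supported K (ctype (L := L) b) := by
  obtain ⟨φ, ⟨P₀, hP₀, hφP₀⟩, hforce⟩ := supported_ctype_iff.1 h
  refine supported_ctype_iff.2
    ⟨φ.subst s ⊓ termsEqual (fun i => (t i).subst s) Term.var, ?_, fun P hP hφP => ?_⟩
  · set d := Term.realize P₀.2 ∘ t
    have hsd : Term.realize d ∘ s = P₀.2 := by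
      have hst := (hforce P₀ hP₀ hφP₀).comp_terms_eq_iff (fun i => (s i).subst t) Term.var
      rw [realize_comp_subst, realize_comp_subst, ← hb, ← ha] at hst
      exact hst.2 rfl
    refine ⟨⟨P₀.1, d⟩, hK P₀ hP₀ d t s rfl hsd.symm, ?_⟩
    rw [Formula.realize_inf, Formula.realize_subst, realize_termsEqual, realize_comp_subst, hsd]
    exact ⟨hφP₀, rfl⟩
  · rw [Formula.realize_inf, Formula.realize_subst, realize_termsEqual, realize_comp_subst]
      at hφP
    obtain ⟨hφ, hts⟩ := hφP
    change _ = P.2 at hts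
    have hsP := hforce _ (hK P hP _ s t rfl hts.symm) hφ
    rw [← hts, hb]
    exact hsP.ctype_comp t

end Paper

theorem stmt_6_general (L : FirstOrder.Language.{0, 0}) (T : L.Theory)
    (n : ℕ) (γ : Ordinal) (M : FirstOrder.Language.Theory.ModelType.{0, 0, 0} T)
    (a : Fin n → M) (ha : Paper.Generates L a)
    (hsup : Paper.Supported (Paper.Kclass T n γ) (Paper.ctype a)) :
    ∀ b : Fin n → M, Paper.Generates L b →
      Paper.Supported (Paper.Kclass T n γ) (Paper.ctype b) := by
  intro b hb
  choose t ht using fun i => ha (b i)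
  choose s hs using fun i => hb (a i)
  exact hsup.ctype_of_interdefinable (Paper.interdefinableClosed_Kclass γ) (funext ht).symm
    (funext hs).symm

/-- If `p_ā(M)` is supported over `K(T|P_{n,γ})` for one generating
`n`-tuple `ā`, then `p_b̄(M)` is supported over `K(T|P_{n,γ})` for every generating
`n`-tuple `b̄`. -/
theorem stmt_6 (L : FirstOrder.Language.{0, 0}) [Countable L.Symbols] (T : L.Theory)
    (n : ℕ) (γ : Ordinal) (M : FirstOrder.Language.Theory.ModelType.{0, 0, 0} T)
    (a : Fin n → M) (ha : Paper.Generates L a)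
    (hsup : Paper.Supported (Paper.Kclass T n γ) (Paper.ctype a)) :
    ∀ b : Fin n → M, Paper.Generates L b →
      Paper.Supported (Paper.Kclass T n γ) (Paper.ctype b) :=
  stmt_6_general L T n γ M a ha hsup
end

section
/- Let T be an n-consistent theory with at most ℵ₀ isomorphism classes of n-generated models, and let M be an n-generated model of T. Then for every generating tuple ā of M, there exists a formula φ(x̄) such that for every finitely generated model N of T generated by b̄: (M, ā) ≅ (N, b̄) if and only if N ⊨ φ(b̄) and rk(N) ≥ rk(M). -/
/-!
Every `n`-generated model of `T` has a rank. The sets `kclassTypes T n γ` of complete types of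
generating tuples realized in `K(T|P_{n,γ})` decrease with `γ`, so they stabilise at some `α`.
If some model had no rank, the stable set would be nonempty and without isolated points (an
isolated type would give its model rank `α + 1`). A Henkin construction along a generic filter
of formulas satisfiable in this perfect set then yields the type of a generating tuple of a model
of `T` outside any given countable list of types, contradicting `α_n(T) ≤ ℵ₀`.

If `rk(M) = γ`, take for `φ` a formula isolating the type of `ā` among the types realized in
`K(T|P_{n,γ})`: a generated model of rank at least `γ` lies in that class, so `N ⊨ φ(b̄)` forces
`b̄` to have the type of `ā`, and generating tuples of the same type are related by an
isomorphism.
-/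

open FirstOrder FirstOrder.Language Cardinal

namespace Paper

variable (L : FirstOrder.Language.{0, 0})

variable {L}

section CompleteTypes

variable {M N : Type*} [L.Structure M] [L.Structure N] {n : ℕ}

def tp (a : Fin n → M) : Set (L.Formula (Fin n)) := {ψ | ψ.Realize a}

@[simp]
lemma mem_tp {a : Fin n → M} {ψ : L.Formula (Fin n)} : ψ ∈ tp a ↔ ψ.Realize a := Iff.rfl

lemma tp_eq_of_subset {a : Fin n → M} {b : Fin n → N} (h : tp (L := L) a ⊆ tp b) :
    tp (L := L) a = tp b := by
  refine h.antisymm fun ψ hψ => by_contra fun hψa => ?_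
  have : ψ.not ∈ tp b := h (Formula.realize_not.2 hψa)
  exact Formula.realize_not.1 this hψ

lemma tp_comp_equiv (e : M ≃[L] N) (a : Fin n → M) : tp (L := L) (e ∘ a) = tp a :=
  Set.ext fun ψ => StrongHomClass.realize_formula e ψ

lemma Generates.comp_equiv {a : Fin n → M} (ha : Generates L a) (e : M ≃[L] N) :
    Generates L (e ∘ a) := fun y => by
  obtain ⟨t, ht⟩ := ha (e.symm y)
  exact ⟨t, by simp [HomClass.realize_term, ht]⟩

lemma Generates.exists_equiv {a : Fin n → M} {b : Fin n → N} (ha : Generates L a)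
    (hb : Generates L b) (h : tp (L := L) a = tp b) : ∃ e : M ≃[L] N, ∀ i, e (a i) = b i := by
  have key : ∀ t s : L.Term (Fin n), t.realize a = s.realize a ↔ t.realize b = s.realize b :=
    fun t s => by simpa using Set.ext_iff.1 h (t.equal s)
  choose g hg using ha
  choose g' hg' using hb
  let F : M → N := fun x => (g x).realize b
  let G : N → M := fun y => (g' y).realize a
  have hF : ∀ t : L.Term (Fin n), F (t.realize a) = t.realize b := fun t => (key _ t).1 (hg _)
  have hG : ∀ t : L.Term (Fin n), G (t.realize b) = t.realize a := fun t => (key _ t).2 (hg' _)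
  refine ⟨⟨⟨F, G, fun x => by rw [← hg x, hF, hG], fun y => by rw [← hg' y, hG, hF]⟩,
    fun f x => ?_, fun r x => ?_⟩, fun i => hF (Term.var i)⟩
  · have : Structure.funMap f x = (Term.func f fun i => g (x i)).realize a := by simp [hg]
    change F _ = _
    rw [this, hF, Term.realize_func]
    rfl
  · have := Set.ext_iff.1 h (Relations.formula r fun i => g (x i))
    simp only [mem_tp, Formula.realize_rel, hg] at this
    exact this.symm

lemma realizesNType_pType_iff {a : Fin n → M} :
    RealizesNType a (pType L n) ↔ ¬ Generates L a := by
  unfold RealizesNType pType Generates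
  dsimp only
  simp only [Set.mem_ofPred_eq, forall_exists_index, forall_eq_apply_imp_iff,
    Formula.realize_not, Formula.realize_equal, Term.realize_relabel, Sum.elim_comp_inl,
    Term.realize_var, Sum.elim_inr, not_forall, not_exists]
  exact ⟨fun ⟨v, hv⟩ => ⟨v 0, hv⟩, fun ⟨y, hy⟩ => ⟨fun _ => y, hy⟩⟩

lemma forall_mem_ctype_realize_iff {a : Fin n → M} {b : Fin n → N} (v : Fin 0 → N) :
    (∀ φ ∈ (ctype (L := L) a).2, φ.Realize (Sum.elim b v)) ↔ tp (L := L) a ⊆ tp b := by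
  unfold ctype
  simp only [Set.mem_ofPred_eq, forall_exists_index, and_imp]
  refine ⟨fun h ψ hψ => ?_, fun h φ ψ hψ hφ => ?_⟩
  · simpa [Formula.realize_relabel, Sum.elim_comp_inl] using h _ ψ hψ rfl
  · subst hφ
    simpa [Formula.realize_relabel, Sum.elim_comp_inl] using h hψ

lemma realizesNType_ctype_iff_s7 {a : Fin n → M} {b : Fin n → N} :
    RealizesNType b (ctype (L := L) a) ↔ tp (L := L) a ⊆ tp b :=
  ⟨fun ⟨v, h⟩ => (forall_mem_ctype_realize_iff v).1 h,
    fun h => ⟨Fin.elim0, (forall_mem_ctype_realize_iff _).2 h⟩⟩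

lemma ctype_eq_of_tp_eq {a : Fin n → M} {b : Fin n → N} (h : tp (L := L) a = tp b) :
    ctype (L := L) a = ctype b := by
  unfold ctype
  congr 2
  ext φ
  simp only [← mem_tp, h]

end CompleteTypes

section Rank

universe u

variable {T : L.Theory} {n : ℕ}

variable (T n) in
def kclassTypes (γ : Ordinal.{0}) : Set (Set (L.Formula (Fin n))) :=
  (fun P => tp P.2) '' Kclass T n γ

def IsIsolated {α : Type*} (S : Set (Set (L.Formula α))) (q : Set (L.Formula α)) : Prop :=
  q ∈ S ∧ ∃ ψ ∈ q, ∀ q' ∈ S, ψ ∈ q' → q' = q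

lemma rankEq_iff {γ : Ordinal.{0}} {M : Theory.ModelType.{0, 0, 0} T} :
    RankEq T n γ M ↔ 1 ≤ γ ∧ (∃ a : Fin n → M, Generates L a) ∧
      ∀ a : Fin n → M, Generates L a → Supported (Kclass T n γ) (ctype a) := by
  rw [RankEq, WellFounded.fix_eq]
  rfl

lemma RankEq.of_equiv {γ : Ordinal.{0}} {M N : Theory.ModelType.{0, 0, 0} T}
    (h : RankEq T n γ M) (e : M ≃[L] N) : RankEq T n γ N := by
  obtain ⟨hγ, ⟨a, ha⟩, hsupp⟩ := rankEq_iff.1 h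
  refine rankEq_iff.2 ⟨hγ, ⟨e ∘ a, ha.comp_equiv e⟩, fun b hb => ?_⟩
  rw [← ctype_eq_of_tp_eq (tp_comp_equiv e.symm b)]
  exact hsupp _ (hb.comp_equiv e.symm)

lemma mem_kclass_iff {γ : Ordinal.{0}} {P : Σ M : Theory.ModelType.{0, 0, 0} T, Fin n → M} :
    P ∈ Kclass T n γ ↔ Generates L P.2 ∧ ∀ β < γ, ¬ RankEq T n β P.1 := by
  simp only [Kclass, Set.mem_ofPred_eq, realizesNType_pType_iff, not_not,
    realizesNType_ctype_iff_s7]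
  refine and_congr_right fun hP => ⟨fun h β hβ hr => h β hβ P.1 hr P.2 hP subset_rfl,
    fun h β hβ N hN b hb hsub => ?_⟩
  obtain ⟨e, -⟩ := hb.exists_equiv hP (tp_eq_of_subset hsub)
  exact h β hβ (hN.of_equiv e)

lemma tp_mem_kclassTypes_iff {γ : Ordinal.{0}} {M : Theory.ModelType.{0, 0, 0} T}
    {a : Fin n → M} (ha : Generates L a) :
    tp a ∈ kclassTypes T n γ ↔ (⟨M, a⟩ : Σ M : Theory.ModelType.{0, 0, 0} T, Fin n → M) ∈
      Kclass T n γ := by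
  refine ⟨?_, fun h => ⟨_, h, rfl⟩⟩
  rintro ⟨P, hP, hPa⟩
  obtain ⟨e, -⟩ := (mem_kclass_iff.1 hP).1.exists_equiv ha hPa
  exact mem_kclass_iff.2
    ⟨ha, fun β hβ hr => (mem_kclass_iff.1 hP).2 β hβ (hr.of_equiv e.symm)⟩

lemma supported_kclass_iff {γ : Ordinal.{0}} {M : Type*} [L.Structure M] {a : Fin n → M} :
    Supported (Kclass T n γ) (ctype a) ↔ IsIsolated (kclassTypes T n γ) (tp a) := by
  change (∃ φ : L.Formula (Fin n ⊕ Fin 0), _) ↔ _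
  constructor
  · rintro ⟨φ, ⟨P, hP, v, hv⟩, hforce⟩
    have hφ : ∀ (Q : Σ M : Theory.ModelType.{0, 0, 0} T, Fin n → M) (w : Fin 0 → Q.1),
        φ.relabel (Sum.elim id Fin.elim0) ∈ tp Q.2 ↔ φ.Realize (Sum.elim Q.2 w) :=
      fun Q w => by
      rw [mem_tp, Formula.realize_relabel, Sum.comp_elim, Subsingleton.elim (Q.2 ∘ Fin.elim0) w]
      rfl
    have hforce' : ∀ Q ∈ Kclass T n γ, φ.relabel (Sum.elim id Fin.elim0) ∈ tp Q.2 →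
        tp Q.2 = tp a := fun Q hQ hφQ =>
      (tp_eq_of_subset ((forall_mem_ctype_realize_iff Fin.elim0).1
        (hforce Q hQ _ ((hφ Q _).1 hφQ)))).symm
    have hPa := hforce' P hP ((hφ P v).2 hv)
    refine ⟨⟨P, hP, hPa⟩, _, hPa ▸ (hφ P v).2 hv, ?_⟩
    rintro _ ⟨Q, hQ, rfl⟩ hφQ
    exact hforce' Q hQ hφQ
  · rintro ⟨⟨P, hP, hPa : tp P.2 = tp a⟩, ψ, hψ, hiso⟩
    have hψ' : ∀ (Q : Σ M : Theory.ModelType.{0, 0, 0} T, Fin n → M) (w : Fin 0 → Q.1),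
        (ψ.relabel Sum.inl : L.Formula (Fin n ⊕ Fin 0)).Realize (Sum.elim Q.2 w) ↔
          ψ ∈ tp Q.2 := fun Q w => by
      rw [Formula.realize_relabel, Sum.elim_comp_inl, mem_tp]
    refine ⟨ψ.relabel Sum.inl, ⟨P, hP, Fin.elim0, (hψ' _ _).2 (hPa ▸ hψ)⟩,
      fun Q hQ w hw => ?_⟩
    exact (forall_mem_ctype_realize_iff w).2 (hiso _ ⟨Q, hQ, rfl⟩ ((hψ' _ _).1 hw)).ge

lemma rankEq_iff_isIsolated {γ : Ordinal.{0}} {M : Theory.ModelType.{0, 0, 0} T} :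
    RankEq T n γ M ↔ 1 ≤ γ ∧ (∃ a : Fin n → M, Generates L a) ∧
      ∀ a : Fin n → M, Generates L a → IsIsolated (kclassTypes T n γ) (tp a) := by
  simp only [rankEq_iff, supported_kclass_iff]

lemma RankEq.not_rankEq_of_lt {β γ : Ordinal.{0}} {M : Theory.ModelType.{0, 0, 0} T}
    (h : RankEq T n γ M) (hβ : β < γ) : ¬ RankEq T n β M := fun hr => by
  obtain ⟨-, ⟨a, ha⟩, hiso⟩ := rankEq_iff_isIsolated.1 h
  exact (mem_kclass_iff.1 ((tp_mem_kclassTypes_iff ha).1 (hiso a ha).1)).2 β hβ hr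

lemma RankEq.mem_kclass {γ : Ordinal.{0}} {M : Theory.ModelType.{0, 0, 0} T} {a : Fin n → M}
    (h : RankEq T n γ M) (ha : Generates L a) :
    (⟨M, a⟩ : Σ M : Theory.ModelType.{0, 0, 0} T, Fin n → M) ∈ Kclass T n γ :=
  mem_kclass_iff.2 ⟨ha, fun _ hβ => h.not_rankEq_of_lt hβ⟩

lemma kclassTypes_antitone : Antitone (kclassTypes T n) := by
  rintro β γ hβγ _ ⟨P, hP, rfl⟩
  exact ⟨P, mem_kclass_iff.2 ⟨(mem_kclass_iff.1 hP).1,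
    fun δ hδ => (mem_kclass_iff.1 hP).2 δ (hδ.trans_le hβγ)⟩, rfl⟩

lemma exists_forall_ge_eq_of_antitone {X : Type u} {f : Ordinal.{u} → Set X}
    (hf : Antitone f) : ∃ α, ∀ γ ≥ α, f γ = f α := by
  let exit : {x // ∃ γ, x ∉ f γ} → Ordinal.{u} := fun x => sInf {γ | x.1 ∉ f γ}
  refine ⟨⨆ x, exit x, fun γ hγ => (hf hγ).antisymm fun x hx => by_contra fun hxγ => ?_⟩
  have hexit : x ∉ f (exit ⟨x, γ, hxγ⟩) := csInf_mem (s := {γ | x ∉ f γ}) ⟨γ, hxγ⟩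
  exact hexit (hf (le_ciSup Ordinal.bddAbove_of_small ⟨x, γ, hxγ⟩) hx)

end Rank

section Perfect

variable {T : L.Theory} {n : ℕ}

lemma isIsolated_tp_of_generates {γ : Ordinal.{0}} {M : Theory.ModelType.{0, 0, 0} T}
    {a b : Fin n → M} (ha : Generates L a) (hb : Generates L b)
    (h : IsIsolated (kclassTypes T n γ) (tp a)) : IsIsolated (kclassTypes T n γ) (tp b) := by
  obtain ⟨ha_mem, φ, hφa, hiso⟩ := h
  have hKa := (tp_mem_kclassTypes_iff ha).1 ha_mem
  have hb_mem : tp b ∈ kclassTypes T n γ :=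
    (tp_mem_kclassTypes_iff hb).2 (mem_kclass_iff.2 ⟨hb, (mem_kclass_iff.1 hKa).2⟩)
  choose t ht using fun i => hb (a i)
  choose s hs using fun i => ha (b i)
  -- `χ(x̄)` says that `t(x̄)` satisfies `φ` and that `x̄ = s(t(x̄))`,
  -- where `b̄ = s(ā)` and `ā = t(b̄)`
  let χ : L.Formula (Fin n) :=
    φ.subst t ⊓ Formula.iInf fun i => (Term.var i).equal ((s i).subst t)
  have hχ : ∀ {N : Type} [L.Structure N] (d : Fin n → N), χ.Realize d ↔
      φ.Realize (fun i => (t i).realize d) ∧ ∀ i, d i = (s i).realize fun j => (t j).realize d :=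
    fun d => by
      simp only [χ, Formula.realize_inf, Formula.realize_iInf, Formula.realize_equal,
        Term.realize_subst, Term.realize_var]
      rw [Formula.Realize, BoundedFormula.realize_subst]
      rfl
  refine ⟨hb_mem, χ, (hχ b).2 ⟨by simpa [ht] using hφa, fun i => by simp [ht, hs]⟩, ?_⟩
  rintro _ ⟨⟨Q, d'⟩, hQ, rfl⟩ hχd'
  obtain ⟨hφd, hd'⟩ := (hχ d').1 hχd'
  have hd : Generates L fun i => (t i).realize d' := fun y => by
    obtain ⟨u, rfl⟩ := (mem_kclass_iff.1 hQ).1 y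
    exact ⟨u.subst s, by rw [Term.realize_subst]; exact congrArg u.realize (funext hd').symm⟩
  have hda := hiso _ ((tp_mem_kclassTypes_iff hd).2
    (mem_kclass_iff.2 ⟨hd, (mem_kclass_iff.1 hQ).2⟩)) hφd
  obtain ⟨e, he⟩ := hd.exists_equiv ha hda
  have hed' : e ∘ d' = b := funext fun i => by
    rw [Function.comp_apply, hd' i, ← HomClass.realize_term, ← hs i]
    exact congrArg (s i).realize (funext he)
  rw [← hed']
  exact (tp_comp_equiv e d').symm

lemma not_rankEq_of_stable {α : Ordinal.{0}}
    (hα : ∀ γ ≥ α, kclassTypes T n γ = kclassTypes T n α)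
    {P : Σ M : Theory.ModelType.{0, 0, 0} T, Fin n → M} (hP : P ∈ Kclass T n α)
    (β : Ordinal.{0}) : ¬ RankEq T n β P.1 := by
  intro hr
  rcases lt_or_ge β α with hβ | hβ
  · exact (mem_kclass_iff.1 hP).2 β hβ hr
  · have : tp P.2 ∈ kclassTypes T n (Order.succ β) := by
      rw [hα _ (hβ.trans (Order.le_succ β))]
      exact ⟨P, hP, rfl⟩
    exact (mem_kclass_iff.1 ((tp_mem_kclassTypes_iff (mem_kclass_iff.1 hP).1).1 this)).2 β
      (Order.lt_succ β) hr

lemma not_isIsolated_of_stable {α : Ordinal.{0}}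
    (hα : ∀ γ ≥ α, kclassTypes T n γ = kclassTypes T n α) :
    ∀ q ∈ kclassTypes T n α, ¬ IsIsolated (kclassTypes T n α) q := by
  rintro _ ⟨P, hP, rfl⟩ hiso
  have hgen := (mem_kclass_iff.1 hP).1
  refine not_rankEq_of_stable hα hP (Order.succ α)
    (rankEq_iff_isIsolated.2 ⟨?_, ⟨P.2, hgen⟩, fun b hb => ?_⟩)
  · exact Order.one_le_iff_pos.2 (zero_le.trans_lt (Order.lt_succ α))
  · rw [hα _ (Order.le_succ α)]
    exact isIsolated_tp_of_generates hgen hb hiso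

end Perfect

section Henkin

variable {T : L.Theory} {n : ℕ}

variable (L T n) in
def generatingTypes : Set (Set (L.Formula (Fin n))) :=
  {q | ∃ P : Σ M : Theory.ModelType.{0, 0, 0} T, Fin n → M, Generates L P.2 ∧ tp P.2 = q}

lemma kclassTypes_subset_generatingTypes (γ : Ordinal.{0}) :
    kclassTypes T n γ ⊆ generatingTypes L T n := by
  rintro _ ⟨P, hP, rfl⟩
  exact ⟨P, (mem_kclass_iff.1 hP).1, rfl⟩

lemma not_mem_iff_of_mem_generatingTypes {q : Set (L.Formula (Fin n))}
    (hq : q ∈ generatingTypes L T n) (χ : L.Formula (Fin n)) : χ.not ∈ q ↔ χ ∉ q := by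
  obtain ⟨P, -, rfl⟩ := hq
  exact Formula.realize_not

lemma eq_of_subset_of_mem_generatingTypes {q r : Set (L.Formula (Fin n))}
    (hq : q ∈ generatingTypes L T n) (hr : r ∈ generatingTypes L T n) (h : q ⊆ r) : q = r := by
  obtain ⟨P, -, rfl⟩ := hq
  obtain ⟨Q, -, rfl⟩ := hr
  exact tp_eq_of_subset h

lemma Generates.countable [Countable L.Symbols] {M : Type*} [L.Structure M] {a : Fin n → M}
    (ha : Generates L a) : Countable M :=
  Function.Surjective.countable (f := fun t : L.Term (Fin n) => t.realize a) ha

lemma countable_generatingTypes [Countable L.Symbols] (hα : alphaCard L T n ≤ Cardinal.aleph0) :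
    (generatingTypes L T n).Countable := by
  have : Countable (Quotient (isoSetoid (L := L) (T := T) (n := n))) :=
    Cardinal.mk_le_aleph0_iff.1 hα
  refine (Set.countable_iUnion fun c : Quotient (isoSetoid (L := L) (T := T) (n := n)) =>
    have := c.out.2.choose_spec.countable
    Set.countable_range fun a : Fin n → c.out.1 => tp a).mono ?_
  rintro _ ⟨P, hgen, rfl⟩
  obtain ⟨e⟩ := Quotient.mk_out (s := isoSetoid) (⟨P.1, P.2, hgen⟩ : NGenModel L T n)
  exact Set.mem_iUnion.2 ⟨_, e.symm ∘ P.2, tp_comp_equiv e.symm P.2⟩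

lemma realize_subst_sumElim_var {α β M : Type*} [L.Structure M] (ψ : L.Formula (α ⊕ β))
    (t : β → L.Term α) (v : α → M) :
    Formula.Realize (ψ.subst (Sum.elim Term.var t)) v ↔
      ψ.Realize (Sum.elim v fun i => (t i).realize v) := by
  unfold Formula.Realize
  rw [BoundedFormula.realize_subst]
  congr!
  rename_i x
  cases x <;> rfl

lemma exists_realize_of_finite {q : Set (L.Formula (Fin n))}
    (h : ∀ F : Finset (L.Formula (Fin n)), ↑F ⊆ q →
      ∃ (M : Theory.ModelType.{0, 0, 0} T) (a : Fin n → M), ∀ χ ∈ F, χ.Realize a) :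
    ∃ (M : Theory.ModelType.{0, 0, 0} T) (a : Fin n → M), ∀ χ ∈ q, χ.Realize a := by
  classical
  let T' : L[[Fin n]].Theory :=
    (L.lhomWithConstants (Fin n)).onTheory T ∪ Formula.equivSentence '' q
  obtain ⟨W⟩ : T'.IsSatisfiable := by
    refine Theory.isSatisfiable_iff_isFinitelySatisfiable.2 fun T0 hT0 => ?_
    obtain ⟨M, a, ha⟩ := h ((T0.image Formula.equivSentence.symm).filter (· ∈ q))
      fun _ hχ => (Finset.mem_filter.1 hχ).2
    let := constantsOn.structure a
    have : M ⊨ (T0 : L[[Fin n]].Theory) := Theory.model_iff _ |>.2 fun σ hσ => by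
      rcases hT0 hσ with hσT | ⟨χ, hχ, rfl⟩
      · have : M ⊨ (L.lhomWithConstants (Fin n)).onTheory T :=
          (LHom.onTheory_model _ _).2 inferInstance
        exact Theory.realize_sentence_of_mem _ hσT
      · refine (Formula.realize_equivSentence (M := _) χ).2 (ha χ ?_)
        exact Finset.mem_filter.2 ⟨Finset.mem_image.2 ⟨_, hσ, by simp⟩, hχ⟩
    exact Theory.Model.isSatisfiable M
  let _ : L.Structure W := (L.lhomWithConstants (Fin n)).reduct W
  refine ⟨(W.subtheoryModel Set.subset_union_left).reduct _, fun i => (L.con i : W),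
    fun χ hχ => ?_⟩
  exact (Formula.realize_equivSentence (M := W) χ).1
    (Theory.realize_sentence_of_mem T' (Set.mem_union_right _ ⟨χ, hχ, rfl⟩))

lemma exists_generates_of_witnesses {W : Theory.ModelType.{0, 0, 0} T} {c : Fin n → W}
    (hc : ∀ (ψ : L.Formula (Fin n ⊕ Fin 1)) (y : W), ψ.Realize (Sum.elim c fun _ => y) →
      ∃ t : L.Term (Fin n), ψ.Realize (Sum.elim c fun _ => t.realize c)) :
    ∃ (N : Theory.ModelType.{0, 0, 0} T) (c' : Fin n → N),
      Generates L c' ∧ tp (L := L) c' = tp c := by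
  let B : L.Substructure W :=
    ⟨Set.range fun t : L.Term (Fin n) => t.realize c, fun f x hx => by
      choose ts hts using hx
      exact ⟨Term.func f ts, by simp [hts]⟩⟩
  have htv : ∀ (m : ℕ) (θ : L.BoundedFormula Empty (m + 1)) (x : Fin m → B) (y : W),
      θ.Realize default (Fin.snoc ((↑) ∘ x) y : _ → W) →
        ∃ b : B, θ.Realize default (Fin.snoc ((↑) ∘ x) b : _ → W) := by
    intro m θ x y hy
    choose ts hts using fun j => (x j).2
    let ψ : L.Formula (Fin n ⊕ Fin 1) := θ.toFormula.subst
      (Sum.elim Empty.elim (Fin.snoc (fun j => (ts j).relabel Sum.inl) (Term.var (Sum.inr 0))))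
    have hψ : ∀ z : W, ψ.Realize (Sum.elim c fun _ => z) ↔
        θ.Realize default (Fin.snoc ((↑) ∘ x) z : _ → W) := fun z => by
      rw [Formula.Realize, BoundedFormula.realize_subst, ← Formula.Realize,
        BoundedFormula.realize_toFormula]
      refine iff_of_eq (congrArg₂ _ (Subsingleton.elim _ _) (funext fun j => ?_))
      refine Fin.lastCases ?_ (fun j => ?_) j
      · simp
      · simp [hts]
    obtain ⟨t, ht⟩ := hc ψ y ((hψ y).2 hy)
    exact ⟨⟨t.realize c, t, rfl⟩, (hψ _).1 ht⟩
  let E := B.toElementarySubstructure htv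
  have : E ⊨ T := (E.theory_model_iff T).2 inferInstance
  let c' : Fin n → E := fun i => ⟨c i, Term.var i, rfl⟩
  refine ⟨Theory.ModelType.of T E, c', fun y => ?_, ?_⟩
  · obtain ⟨t, ht⟩ := y.2
    exact ⟨t, Subtype.ext (by rw [← ht]; exact (HomClass.realize_term E.subtype).symm)⟩
  · exact Set.ext fun φ => (E.subtype.map_formula φ c').symm

lemma mem_generatingTypes_of_henkin {q : Set (L.Formula (Fin n))}
    (hfin : ∀ F : Finset (L.Formula (Fin n)), ↑F ⊆ q →
      ∃ (M : Theory.ModelType.{0, 0, 0} T) (a : Fin n → M), ∀ χ ∈ F, χ.Realize a)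
    (hcompl : ∀ χ, χ ∉ q → χ.not ∈ q)
    (hhenkin : ∀ ψ : L.Formula (Fin n ⊕ Fin 1), ψ.iExs (Fin 1) ∈ q →
      ∃ t : L.Term (Fin n), ψ.subst (Sum.elim Term.var fun _ => t) ∈ q) :
    q ∈ generatingTypes L T n := by
  obtain ⟨W, c, hc⟩ := exists_realize_of_finite hfin
  have hq : tp c = q :=
    Set.Subset.antisymm (fun χ hχ => by_contra fun h => hc _ (hcompl χ h) hχ) hc
  obtain ⟨N, c', hc', hc'c⟩ := exists_generates_of_witnesses (c := c) fun ψ y hy => by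
    obtain ⟨t, ht⟩ := hhenkin ψ (hq ▸ Formula.realize_iExs.2 ⟨_, hy⟩)
    rw [← hq] at ht
    exact ⟨t, (realize_subst_sumElim_var ψ _ c).1 ht⟩
  exact ⟨⟨N, c'⟩, hc', hc'c.trans hq⟩

end Henkin

section Generic

variable {T : L.Theory} {n : ℕ}

variable {α : Type*}

def Forces (S : Set (Set (L.Formula α))) (φ ψ : L.Formula α) : Prop :=
  ∀ q ∈ S, φ ∈ q → ψ ∈ q

def Condition (S : Set (Set (L.Formula α))) : Type _ :=
  {φ : L.Formula α // ∃ q ∈ S, φ ∈ q}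

/-- Stronger conditions are larger, so that an ideal, as produced by the Rasiowa–Sikorski lemma
`Order.idealOfCofinals`, is a filter of formulas. -/
instance (S : Set (Set (L.Formula α))) : Preorder (Condition S) where
  le p p' := Forces S p'.1 p.1
  le_refl _ _ _ := id
  le_trans _ _ _ h h' q hq := h q hq ∘ h' q hq

variable {S : Set (Set (L.Formula (Fin n)))}

lemma Condition.exists_le_forces (hS : S ⊆ generatingTypes L T n) (p : Condition S)
    {q : Set (L.Formula (Fin n))} (hq : q ∈ S) (hp : p.1 ∈ q) {ψ : L.Formula (Fin n)}
    (hψ : ψ ∈ q) : ∃ p' : Condition S, p ≤ p' ∧ Forces S p'.1 ψ := by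
  have hinf : ∀ q' ∈ S, p.1 ⊓ ψ ∈ q' ↔ p.1 ∈ q' ∧ ψ ∈ q' := by
    rintro _ hq'
    obtain ⟨P, -, rfl⟩ := hS hq'
    exact Formula.realize_inf
  exact ⟨⟨p.1 ⊓ ψ, q, hq, (hinf q hq).2 ⟨hp, hψ⟩⟩, fun q' hq' h => ((hinf q' hq').1 h).1,
    fun q' hq' h => ((hinf q' hq').1 h).2⟩

lemma isCofinal_forces_or_forces_not (hS : S ⊆ generatingTypes L T n) (χ : L.Formula (Fin n)) :
    IsCofinal {p : Condition S | Forces S p.1 χ ∨ Forces S p.1 χ.not} := by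
  intro p
  obtain ⟨q, hq, hp⟩ := p.2
  by_cases hχ : χ ∈ q
  · obtain ⟨p', hle, hf⟩ := p.exists_le_forces hS hq hp hχ
    exact ⟨p', Or.inl hf, hle⟩
  · obtain ⟨p', hle, hf⟩ :=
      p.exists_le_forces hS hq hp ((not_mem_iff_of_mem_generatingTypes (hS hq) χ).2 hχ)
    exact ⟨p', Or.inr hf, hle⟩

lemma isCofinal_forces_witness (hS : S ⊆ generatingTypes L T n)
    (ψ : L.Formula (Fin n ⊕ Fin 1)) :
    IsCofinal {p : Condition S | Forces S p.1 (ψ.iExs (Fin 1)).not ∨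
      ∃ t : L.Term (Fin n), Forces S p.1 (ψ.subst (Sum.elim Term.var fun _ => t))} := by
  intro p
  by_cases h : ∃ q ∈ S, p.1 ∈ q ∧ ψ.iExs (Fin 1) ∈ q
  · obtain ⟨q, hq, hp, hψ⟩ := h
    obtain ⟨P, hP, rfl⟩ := hS hq
    obtain ⟨y, hy⟩ := Formula.realize_iExs.1 hψ
    obtain ⟨t, ht⟩ := hP (y 0)
    have hy' : y = fun _ => t.realize P.2 := funext fun i => by rw [Subsingleton.elim i 0, ht]
    subst hy'
    obtain ⟨p', hle, hf⟩ :=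
      p.exists_le_forces hS hq hp ((realize_subst_sumElim_var ψ (fun _ => t) P.2).2 hy)
    exact ⟨p', Or.inr ⟨t, hf⟩, hle⟩
  · push Not at h
    exact ⟨p, Or.inl fun q hq hp =>
      (not_mem_iff_of_mem_generatingTypes (hS hq) _).2 (h q hq hp), le_rfl⟩

lemma isCofinal_forces_not_mem (hS : S ⊆ generatingTypes L T n)
    (hperf : ∀ q ∈ S, ¬ IsIsolated S q) {r : Set (L.Formula (Fin n))}
    (hr : r ∈ generatingTypes L T n) :
    IsCofinal {p : Condition S | ∃ ψ ∉ r, Forces S p.1 ψ} := by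
  intro p
  obtain ⟨q, hq, hp⟩ := p.2
  obtain ⟨q', hq', hpq', hne⟩ : ∃ q' ∈ S, p.1 ∈ q' ∧ q' ≠ r := by
    by_cases hqr : q = r
    · subst hqr
      have := hperf q hq
      simp only [IsIsolated, not_and, not_exists, not_forall] at this
      obtain ⟨q', hq', hpq', hne⟩ := this hq p.1 hp
      exact ⟨q', hq', hpq', hne⟩
    · exact ⟨q, hq, hp, hqr⟩
  obtain ⟨ψ, hψq', hψr⟩ : ∃ ψ ∈ q', ψ ∉ r := by
    by_contra! h
    exact hne (eq_of_subset_of_mem_generatingTypes (hS hq') hr h)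
  obtain ⟨p', hle, hf⟩ := p.exists_le_forces hS hq' hpq' hψq'
  exact ⟨p', ⟨ψ, hψr, hf⟩, hle⟩

def genericType (I : Order.Ideal (Condition S)) : Set (L.Formula (Fin n)) :=
  {ψ | ∃ p ∈ I, Forces S p.1 ψ}

lemma exists_mem_ideal_forces_finset (I : Order.Ideal (Condition S))
    (F : Finset (L.Formula (Fin n))) (hF : ↑F ⊆ genericType I) :
    ∃ p ∈ I, ∀ ψ ∈ F, Forces S p.1 ψ := by
  classical
  induction F using Finset.induction_on with
  | empty =>
    obtain ⟨p, hp⟩ := I.nonempty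
    exact ⟨p, hp, by simp⟩
  | insert ψ F _ ih =>
    obtain ⟨p₁, hp₁, hψ⟩ := hF (Finset.mem_insert_self ψ F)
    obtain ⟨p₂, hp₂, hF'⟩ := ih fun χ hχ => hF (Finset.mem_insert_of_mem hχ)
    obtain ⟨p, hp, h₁, h₂⟩ := I.directed p₁ hp₁ p₂ hp₂
    refine ⟨p, hp, fun χ hχ => ?_⟩
    rcases Finset.mem_insert.1 hχ with rfl | hχ
    · exact fun q hq h => hψ q hq (h₁ q hq h)
    · exact fun q hq h => hF' χ hχ q hq (h₂ q hq h)

lemma genericType_finitely_realized (hS : S ⊆ generatingTypes L T n)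
    (I : Order.Ideal (Condition S)) (F : Finset (L.Formula (Fin n))) (hF : ↑F ⊆ genericType I) :
    ∃ (M : Theory.ModelType.{0, 0, 0} T) (a : Fin n → M), ∀ χ ∈ F, χ.Realize a := by
  obtain ⟨p, -, hp⟩ := exists_mem_ideal_forces_finset I F hF
  obtain ⟨q, hq, hpq⟩ := p.2
  obtain ⟨P, -, rfl⟩ := hS hq
  exact ⟨P.1, P.2, fun χ hχ => hp χ hχ _ hq hpq⟩

lemma not_mem_genericType_not (hS : S ⊆ generatingTypes L T n)
    (I : Order.Ideal (Condition S)) {χ : L.Formula (Fin n)} (hχ : χ ∈ genericType I) :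
    χ.not ∉ genericType I := fun hχ' => by
  classical
  obtain ⟨M, a, ha⟩ := genericType_finitely_realized hS I {χ, χ.not}
    (by simp [Set.insert_subset_iff, hχ, hχ'])
  exact Formula.realize_not.1 (ha χ.not (by simp)) (ha χ (by simp))

theorem not_countable_generatingTypes_of_perfect [Countable L.Symbols]
    (hS : S ⊆ generatingTypes L T n) (hne : S.Nonempty) (hperf : ∀ q ∈ S, ¬ IsIsolated S q) :
    ¬ (generatingTypes L T n).Countable := by
  intro hcount
  have := hcount.to_subtype
  let ι := generatingTypes L T n ⊕ L.Formula (Fin n) ⊕ L.Formula (Fin n ⊕ Fin 1)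
  have : Encodable ι := Encodable.ofCountable ι
  let D : ι → Order.Cofinal (Condition S) :=
    Sum.elim (fun r => ⟨_, isCofinal_forces_not_mem hS hperf r.2⟩)
      (Sum.elim (fun χ => ⟨_, isCofinal_forces_or_forces_not hS χ⟩)
        fun ψ => ⟨_, isCofinal_forces_witness hS ψ⟩)
  obtain ⟨q₀, hq₀⟩ := hne
  obtain ⟨P, -, rfl⟩ := hS hq₀
  let p₀ : Condition S := ⟨⊤, _, hq₀, Formula.realize_top.2 trivial⟩
  let I := Order.idealOfCofinals p₀ D
  have hmeet := Order.cofinal_meets_idealOfCofinals p₀ D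
  have hcompl : ∀ χ, χ ∉ genericType I → χ.not ∈ genericType I := fun χ hχ => by
    obtain ⟨p, hp | hp, hpI⟩ := hmeet (Sum.inr (Sum.inl χ))
    · exact absurd ⟨p, hpI, hp⟩ hχ
    · exact ⟨p, hpI, hp⟩
  have hhenkin : ∀ ψ : L.Formula (Fin n ⊕ Fin 1), ψ.iExs (Fin 1) ∈ genericType I →
      ∃ t, ψ.subst (Sum.elim Term.var fun _ => t) ∈ genericType I := fun ψ hψ => by
    obtain ⟨p, hp | ⟨t, hp⟩, hpI⟩ := hmeet (Sum.inr (Sum.inr ψ))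
    · exact absurd ⟨p, hpI, hp⟩ (not_mem_genericType_not hS I hψ)
    · exact ⟨t, p, hpI, hp⟩
  have hgen := mem_generatingTypes_of_henkin (genericType_finitely_realized hS I) hcompl hhenkin
  obtain ⟨p, ⟨ψ, hψ, hp⟩, hpI⟩ := hmeet (Sum.inl ⟨_, hgen⟩)
  exact hψ ⟨p, hpI, hp⟩

end Generic

lemma exists_rankEq [Countable L.Symbols] {T : L.Theory} {n : ℕ}
    (hα : alphaCard L T n ≤ Cardinal.aleph0) {M : Theory.ModelType.{0, 0, 0} T}
    {a : Fin n → M} (ha : Generates L a) : ∃ γ, RankEq T n γ M := by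
  by_contra! hM
  obtain ⟨α, hstable⟩ := exists_forall_ge_eq_of_antitone
    (kclassTypes_antitone (T := T) (n := n))
  exact not_countable_generatingTypes_of_perfect (kclassTypes_subset_generatingTypes α)
    ⟨tp a, (tp_mem_kclassTypes_iff ha).2 (mem_kclass_iff.2 ⟨ha, fun β _ => hM β⟩)⟩
    (not_isIsolated_of_stable hstable) (countable_generatingTypes hα)

end Paper

theorem stmt_7_general (L : FirstOrder.Language.{0, 0}) [Countable L.Symbols] (T : L.Theory)
    (n : ℕ)
    (hα : Paper.alphaCard L T n ≤ Cardinal.aleph0)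
    (M : FirstOrder.Language.Theory.ModelType.{0, 0, 0} T)
    (a : Fin n → M) (ha : Paper.Generates L a) :
    ∃ φ : L.Formula (Fin n),
      ∀ (N : FirstOrder.Language.Theory.ModelType.{0, 0, 0} T) (b : Fin n → N),
        Paper.Generates L b →
        ((∃ e : (M : Type) ≃[L] (N : Type), ∀ i, e (a i) = b i) ↔
          (φ.Realize b ∧
            ∀ γ : Ordinal, Paper.RankEq T n γ M → (⟨N, b⟩ : Σ N' : FirstOrder.Language.Theory.ModelType.{0, 0, 0} T, Fin n → N') ∈ Paper.Kclass T n γ)) := by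
  obtain ⟨γ₀, hγ₀⟩ := Paper.exists_rankEq hα ha
  obtain ⟨-, φ, hφa, hiso⟩ := (Paper.rankEq_iff_isIsolated.1 hγ₀).2.2 a ha
  refine ⟨φ, fun N b hb => ⟨?_, fun ⟨hφb, hK⟩ => ?_⟩⟩
  · rintro ⟨e, he⟩
    have hba : Paper.tp (L := L) b = Paper.tp a := by
      rw [← Paper.tp_comp_equiv e a, show e ∘ a = b from funext he]
    exact ⟨(hba ▸ hφa : φ ∈ Paper.tp b), fun γ hγ => (hγ.of_equiv e).mem_kclass hb⟩
  · exact ha.exists_equiv hb (hiso _ ⟨⟨N, b⟩, hK γ₀ hγ₀, rfl⟩ hφb).symm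

/-- For every generating tuple `ā` of an `n`-generated model `M` of `T`
(`T` `n`-consistent with at most `ℵ₀` classes of `n`-generated models), there is a formula
`φ` such that, for every model `N` of `T` generated by `b̄`, `(M, ā) ≅ (N, b̄)` iff
`N ⊨ φ(b̄)` and `rk(N) ≥ rk(M)`. -/
theorem stmt_7 (L : FirstOrder.Language.{0, 0}) [Countable L.Symbols] (T : L.Theory)
    (n : ℕ) (hcons : Paper.NConsistent L T n)
    (hα : Paper.alphaCard L T n ≤ Cardinal.aleph0)
    (M : FirstOrder.Language.Theory.ModelType.{0, 0, 0} T)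
    (a : Fin n → M) (ha : Paper.Generates L a) :
    ∃ φ : L.Formula (Fin n),
      ∀ (N : FirstOrder.Language.Theory.ModelType.{0, 0, 0} T) (b : Fin n → N),
        Paper.Generates L b →
        ((∃ e : (M : Type) ≃[L] (N : Type), ∀ i, e (a i) = b i) ↔
          (φ.Realize b ∧
            ∀ γ : Ordinal, Paper.RankEq T n γ M → (⟨N, b⟩ : Σ N' : FirstOrder.Language.Theory.ModelType.{0, 0, 0} T, Fin n → N') ∈ Paper.Kclass T n γ)) :=
  stmt_7_general L T n hα M a ha
end
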